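/- arXiv:1407.0551 — 2 statements merged into one kernel-verified Lean document; each statement's English description precedes it below -/
import Mathlib

section
/- Let 1 ≤ p, q < ∞, let ω be a weight on the upper half-plane 𝓗, and let μ be a positive Borel measure on 𝓗. Then the following are equivalent: (i) there exists a constant C₁ > 0 such that for every bounded interval I ⊂ ℝ, |Q_I|^{−q/p} (|Q_I|^{−1} ∫_{Q_I} ω^{1−p'} dV)^{q/p'} μ(Q_I) ≤ C₁, where for p = 1 the quantity (|Q_I|^{−1} ∫_{Q_I} ω^{1−p'} dV)^{1/p'} is interpreted as (ess inf_{Q_I} ω)^{−1}; (ii) there exists a constant C₂ > 0 such that for every locally integrable function f on 𝓗 and every bounded interval I ⊂ ℝ, (|Q_I|^{−1} ∫_{Q_I} |f| dV)^q μ(Q_I) ≤ C₂ (∫_{Q_I} |f|^p ω dV)^{q/p}. -/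
open MeasureTheory Set
open scoped ENNReal NNReal Classical

noncomputable section

/-- The upper half-plane `𝓗`. -/
def UHP : Set ℂ := {z : ℂ | 0 < z.im}

/-- The Carleson box `Q_I` over the bounded interval `I = [a, b)`. -/
def Box (a b : ℝ) : Set ℂ := {z : ℂ | z.re ∈ Set.Ico a b ∧ z.im ∈ Set.Ioo 0 (b - a)}

/-- The quantity `(|Q_I|^{-1} ∫_{Q_I} ω^{1-p'} dV)^{1/p'}`, interpreted as
`(ess inf_{Q_I} ω)⁻¹` when `p = 1` (here `p' = p/(p-1)` and `1/p' = (p-1)/p`). -/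
def dualFactor (ω : ℂ → ℝ≥0∞) (p a b : ℝ) : ℝ≥0∞ :=
  if p = 1 then (essInf ω (volume.restrict (Box a b)))⁻¹
  else ((volume (Box a b))⁻¹ * ∫⁻ z in Box a b, ω z ^ (1 - p / (p - 1))) ^ ((p - 1) / p)

/-!
On a box `Q` with `ν = dV|_Q`, the supremum over `g ≥ 0` of `∫ g dν / (∫ g^p ω dν)^{1/p}` equals
`(∫_Q ω^{1-p'})^{1/p'}` for `p > 1` and `(ess inf_Q ω)⁻¹` for `p = 1`. The upper bound is Hölder's
inequality (resp. `ess inf ω ≤ ω` a.e.); it is approached by the truncations `min(ω^{1-p'}, n)`,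
which satisfy `g^p ω ≤ g`, resp. by the indicators of `{ω < t}` with `t ↓ ess inf ω`. Multiplying
by `|Q|⁻¹`, raising to the power `q` and multiplying by `μ(Q)` commute with this supremum, so
condition (i) on `Q` is condition (ii) on `Q`, with the same constant.
-/

theorem ENNReal.iSup_rpow {ι : Sort*} (f : ι → ℝ≥0∞) {q : ℝ} (hq : 0 < q) :
    (⨆ i, f i) ^ q = ⨆ i, f i ^ q :=
  (ENNReal.orderIsoRpow q hq).map_iSup f

theorem ENNReal.rpow_mul_le_self_of_rpow_sub_one_le_inv {u y : ℝ≥0∞} {p : ℝ} (hp : 1 ≤ p)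
    (h : u ^ (p - 1) ≤ y⁻¹) : u ^ p * y ≤ u :=
  calc u ^ p * y = u * (u ^ (p - 1) * y) := by
        conv_lhs => rw [← add_sub_cancel 1 p]
        rw [ENNReal.rpow_add_of_nonneg _ _ zero_le_one (sub_nonneg.2 hp), ENNReal.rpow_one,
          mul_assoc]
    _ ≤ u * (y⁻¹ * y) := by gcongr
    _ ≤ u := mul_le_of_le_one_right' (ENNReal.inv_mul_le_one y)

theorem ENNReal.rpow_le_div_rpow {a b : ℝ≥0∞} {s r : ℝ} (hs : 0 < s) (hr : 0 ≤ r)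
    (hsr : s + r = 1) (hb : b ≤ a) (ha : a ≠ ⊤) : a ^ s ≤ a / b ^ r := by
  rcases eq_or_ne a 0 with rfl | ha0
  · simp [ENNReal.zero_rpow_of_pos hs]
  rw [ENNReal.le_div_iff_mul_le (Or.inr ha0) (Or.inr ha)]
  calc a ^ s * b ^ r ≤ a ^ s * a ^ r := by gcongr
    _ = a := by rw [← ENNReal.rpow_add_of_nonneg _ _ hs.le hr, hsr, ENNReal.rpow_one]

theorem ENNReal.mul_div_rpow_rpow_mul_le_iff {a b c X C : ℝ≥0∞} {p q : ℝ} (hq : 0 ≤ q)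
    (hC0 : C ≠ 0) (hCt : C ≠ ⊤) :
    (c * (a / b ^ (1 / p))) ^ q * X ≤ C ↔ (c * a) ^ q * X ≤ C * b ^ (q / p) := by
  rw [← mul_div_assoc, ENNReal.div_rpow_of_nonneg _ _ hq, ← ENNReal.rpow_mul, one_div_mul_eq_div,
    div_eq_mul_inv, mul_right_comm, ← div_eq_mul_inv,
    ENNReal.div_le_iff_le_mul (Or.inr hCt) (Or.inr hC0)]

theorem ENNReal.le_rpow_mul_rpow_of_one_lt {x y : ℝ≥0∞} {p : ℝ} (hp : 1 < p) (hy : y ≠ 0)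
    (hxy : x ^ p * y ≠ ⊤) :
    x ≤ (x ^ p * y) ^ (1 / p) * (y ^ (1 - p / (p - 1))) ^ ((p - 1) / p) := by
  have hp0 : 0 < p := zero_lt_one.trans hp
  rcases eq_or_ne y ⊤ with rfl | hyt
  · have hx : x = 0 := by
      by_contra hx
      exact hxy (ENNReal.mul_top ((ENNReal.rpow_eq_zero_iff_of_pos hp0).not.2 hx))
    simp [hx]
  have hexp : 1 / p + (1 - p / (p - 1)) * ((p - 1) / p) = 0 := by
    have : p - 1 ≠ 0 := sub_ne_zero.2 hp.ne'
    field_simp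
    ring
  rw [ENNReal.mul_rpow_of_nonneg _ _ (by positivity), ← ENNReal.rpow_mul x,
    mul_one_div_cancel hp0.ne', ENNReal.rpow_one, ← ENNReal.rpow_mul y, mul_assoc,
    ← ENNReal.rpow_add _ _ hy hyt, hexp, ENNReal.rpow_zero, mul_one]

section WeightedNorm

variable {α : Type*} [MeasurableSpace α]

/-- `‖g‖_{L¹(ν)} / ‖g‖_{L^p(ω ν)}`, with `a / 0 = ⊤` for `a ≠ 0` and `a / ⊤ = 0`. -/
def weightedNormRatio (ν : Measure α) (ω : α → ℝ≥0∞) (p : ℝ) (g : α → ℝ≥0) : ℝ≥0∞ :=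
  (∫⁻ x, g x ∂ν) / (∫⁻ x, (g x : ℝ≥0∞) ^ p * ω x ∂ν) ^ (1 / p)

/-- `‖ω^{-1/p}‖_{L^{p'}(ν)}`, i.e. `dualFactor` without the normalisation by `|Q|`. -/
def dualWeight (ν : Measure α) (ω : α → ℝ≥0∞) (p : ℝ) : ℝ≥0∞ :=
  if p = 1 then (essInf ω ν)⁻¹ else (∫⁻ x, ω x ^ (1 - p / (p - 1)) ∂ν) ^ ((p - 1) / p)

variable {ν : Measure α} {ω : α → ℝ≥0∞}

theorem weightedNormRatio_one_le_inv_essInf (g : α → ℝ≥0) :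
    weightedNormRatio ν ω 1 g ≤ (essInf ω ν)⁻¹ := by
  set m := essInf ω ν
  have hB : m * ∫⁻ x, g x ∂ν ≤ ∫⁻ x, (g x : ℝ≥0∞) * ω x ∂ν :=
    (lintegral_const_mul_le _ _).trans <| lintegral_mono_ae <| by
      filter_upwards [ae_essInf_le (f := ω) (μ := ν)] with x hx
      rw [mul_comm]
      gcongr
  simp only [weightedNormRatio, div_one, ENNReal.rpow_one]
  rw [ENNReal.le_inv_iff_mul_le]
  calc (∫⁻ x, g x ∂ν) / (∫⁻ x, (g x : ℝ≥0∞) * ω x ∂ν) * m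
      = (m * ∫⁻ x, g x ∂ν) / ∫⁻ x, (g x : ℝ≥0∞) * ω x ∂ν := by
        rw [div_eq_mul_inv, div_eq_mul_inv, mul_comm m, mul_right_comm]
    _ ≤ (∫⁻ x, (g x : ℝ≥0∞) * ω x ∂ν) / ∫⁻ x, (g x : ℝ≥0∞) * ω x ∂ν := by gcongr
    _ ≤ 1 := ENNReal.div_self_le_one

theorem inv_essInf_le_iSup_weightedNormRatio_one [IsFiniteMeasure ν] (hω : Measurable ω) :
    (essInf ω ν)⁻¹ ≤ ⨆ (g : α → ℝ≥0) (_ : Measurable g), weightedNormRatio ν ω 1 g := by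
  refine le_of_forall_lt_imp_le_of_dense fun c hc => ?_
  set S := {x | ω x < c⁻¹}
  have hS : MeasurableSet S := measurableSet_lt hω measurable_const
  have hνS : ν S ≠ 0 := fun h0 =>
    (ENNReal.lt_inv_iff_lt_inv.1 hc).not_ge <| le_essInf_of_ae_le _ <| by
      filter_upwards [measure_eq_zero_iff_ae_notMem.1 h0] with x hx
      exact not_lt.1 hx
  have hind : ∀ x, ((S.indicator 1 x : ℝ≥0) : ℝ≥0∞) = S.indicator 1 x := fun x => by
    by_cases hx : x ∈ S <;> simp [hx]
  have hB : ∫⁻ x, ((S.indicator 1 x : ℝ≥0) : ℝ≥0∞) ^ (1 : ℝ) * ω x ∂ν ≤ c⁻¹ * ν S := by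
    have : ∀ x, ((S.indicator 1 x : ℝ≥0) : ℝ≥0∞) ^ (1 : ℝ) * ω x = S.indicator ω x := fun x => by
      by_cases hx : x ∈ S <;> simp [hx]
    simp_rw [this, lintegral_indicator hS]
    calc ∫⁻ x in S, ω x ∂ν ≤ ∫⁻ _ in S, c⁻¹ ∂ν := setLIntegral_mono' hS fun x hx => le_of_lt hx
      _ = c⁻¹ * ν S := setLIntegral_const _ _
  have hI : ∫⁻ x, ((S.indicator 1 x : ℝ≥0) : ℝ≥0∞) ∂ν = ν S := by
    simp_rw [hind]
    exact lintegral_indicator_one hS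
  refine le_iSup₂_of_le (S.indicator 1) (measurable_one.indicator hS) ?_
  simp only [weightedNormRatio, div_one, ENNReal.rpow_one] at hB ⊢
  rw [hI, ENNReal.le_div_iff_mul_le (Or.inr hνS) (Or.inr (measure_ne_top ν S))]
  calc c * _ ≤ c * (c⁻¹ * ν S) := by gcongr
    _ ≤ ν S := by
      rw [← mul_assoc]
      exact mul_le_of_le_one_left' (ENNReal.mul_inv_le_one c)

theorem lintegral_le_weightedLp_mul_dual {p : ℝ} (hp : 1 < p) (hω : Measurable ω)
    {g : α → ℝ≥0∞} (hg : Measurable g)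
    (hA : ∫⁻ x, ω x ^ (1 - p / (p - 1)) ∂ν ≠ ⊤) (hB : ∫⁻ x, g x ^ p * ω x ∂ν ≠ ⊤) :
    ∫⁻ x, g x ∂ν ≤
      (∫⁻ x, g x ^ p * ω x ∂ν) ^ (1 / p) * (∫⁻ x, ω x ^ (1 - p / (p - 1)) ∂ν) ^ ((p - 1) / p) := by
  have hp0 : 0 < p := zero_lt_one.trans hp
  have he : 1 - p / (p - 1) < 0 := by
    rw [sub_neg, one_lt_div (sub_pos.2 hp)]
    linarith
  have hωe : Measurable fun x => ω x ^ (1 - p / (p - 1)) := hω.pow_const _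
  have hpoint : ∀ᵐ x ∂ν,
      g x ≤ (g x ^ p * ω x) ^ (1 / p) * (ω x ^ (1 - p / (p - 1))) ^ ((p - 1) / p) := by
    filter_upwards [ae_lt_top hωe hA, ae_lt_top ((hg.pow_const p).mul hω) hB] with x hA hB
    refine ENNReal.le_rpow_mul_rpow_of_one_lt hp (fun h0 => ?_) hB.ne
    rw [h0, ENNReal.zero_rpow_of_neg he] at hA
    exact lt_irrefl _ hA
  have hpq : p.HolderConjugate (p / (p - 1)) :=
    (Real.holderConjugate_iff_eq_conjExponent hp).2 rfl
  calc ∫⁻ x, g x ∂ν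
      ≤ ∫⁻ x, (g x ^ p * ω x) ^ (1 / p) * (ω x ^ (1 - p / (p - 1))) ^ ((p - 1) / p) ∂ν :=
        lintegral_mono_ae hpoint
    _ ≤ (∫⁻ x, ((g x ^ p * ω x) ^ (1 / p)) ^ p ∂ν) ^ (1 / p) *
          (∫⁻ x, ((ω x ^ (1 - p / (p - 1))) ^ ((p - 1) / p)) ^ (p / (p - 1)) ∂ν) ^
            (1 / (p / (p - 1))) :=
        ENNReal.lintegral_mul_le_Lp_mul_Lq ν hpq
          (((hg.pow_const p).mul hω).pow_const _).aemeasurable (hωe.pow_const _).aemeasurable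
    _ = _ := by
        have hp' : (p - 1) / p * (p / (p - 1)) = 1 := by
          have : p - 1 ≠ 0 := sub_ne_zero.2 hp.ne'
          field_simp
        simp_rw [← ENNReal.rpow_mul, one_div_mul_cancel hp0.ne', mul_assoc, hp', mul_one,
          ENNReal.rpow_one, one_div_div]

theorem weightedNormRatio_le_of_one_lt {p : ℝ} (hp : 1 < p) (hω : Measurable ω) {g : α → ℝ≥0}
    (hg : Measurable g) :
    weightedNormRatio ν ω p g ≤ (∫⁻ x, ω x ^ (1 - p / (p - 1)) ∂ν) ^ ((p - 1) / p) := by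
  have hs : 0 < (p - 1) / p := div_pos (sub_pos.2 hp) (zero_lt_one.trans hp)
  rcases eq_or_ne (∫⁻ x, ω x ^ (1 - p / (p - 1)) ∂ν) ⊤ with hA | hA
  · simp [hA, ENNReal.top_rpow_of_pos hs]
  rcases eq_or_ne (∫⁻ x, (g x : ℝ≥0∞) ^ p * ω x ∂ν) ⊤ with hB | hB
  · simp [weightedNormRatio, hB, ENNReal.top_rpow_of_pos (inv_pos.2 (zero_lt_one.trans hp))]
  refine ENNReal.div_le_of_le_mul ?_
  rw [mul_comm]
  exact lintegral_le_weightedLp_mul_dual hp hω hg.coe_nnreal_ennreal hA hB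

theorem rpow_lintegral_le_iSup_weightedNormRatio_of_one_lt [IsFiniteMeasure ν] {p : ℝ}
    (hp : 1 < p) (hω : Measurable ω) :
    (∫⁻ x, ω x ^ (1 - p / (p - 1)) ∂ν) ^ ((p - 1) / p) ≤
      ⨆ (g : α → ℝ≥0) (_ : Measurable g), weightedNormRatio ν ω p g := by
  have hp0 : 0 < p := zero_lt_one.trans hp
  set e := 1 - p / (p - 1)
  have he : e * (p - 1) = -1 := by
    have : p - 1 ≠ 0 := sub_ne_zero.2 hp.ne'
    simp only [e]
    field_simp
    ring
  let g : ℕ → α → ℝ≥0 := fun n x => (min (ω x ^ e) n).toNNReal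
  have hg : ∀ n x, (g n x : ℝ≥0∞) = min (ω x ^ e) n := fun n x =>
    ENNReal.coe_toNNReal (ne_top_of_le_ne_top (ENNReal.natCast_ne_top n) (min_le_right _ _))
  have hgm : ∀ n, Measurable (g n) := fun n =>
    ((hω.pow_const e).min measurable_const).ennreal_toNNReal
  have hA : ∫⁻ x, ω x ^ e ∂ν = ⨆ n, ∫⁻ x, (g n x : ℝ≥0∞) ∂ν := by
    simp_rw [hg]
    rw [← lintegral_iSup (fun n => (hω.pow_const e).min measurable_const)
      fun m n hmn x => min_le_min le_rfl (Nat.cast_le.2 hmn)]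
    simp_rw [← inf_iSup_eq, ENNReal.iSup_natCast, inf_top_eq]
  rw [hA, ENNReal.iSup_rpow _ (div_pos (sub_pos.2 hp) hp0)]
  refine iSup_le fun n => le_iSup₂_of_le (g n) (hgm n) ?_
  refine ENNReal.rpow_le_div_rpow (div_pos (sub_pos.2 hp) hp0) (one_div_nonneg.2 hp0.le)
    (by field_simp; ring) (lintegral_mono fun x => ?_) ?_
  · refine ENNReal.rpow_mul_le_self_of_rpow_sub_one_le_inv hp.le ?_
    calc (g n x : ℝ≥0∞) ^ (p - 1) ≤ (ω x ^ e) ^ (p - 1) := by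
          rw [hg]
          exact ENNReal.rpow_le_rpow (min_le_left _ _) (sub_nonneg.2 hp.le)
      _ = (ω x)⁻¹ := by
          rw [← ENNReal.rpow_mul, he, ENNReal.rpow_neg_one]
  · refine ne_top_of_le_ne_top (ENNReal.mul_ne_top (ENNReal.natCast_ne_top n)
      (measure_ne_top ν univ)) ?_
    calc ∫⁻ x, (g n x : ℝ≥0∞) ∂ν ≤ ∫⁻ _, (n : ℝ≥0∞) ∂ν :=
          lintegral_mono fun x => (hg n x).trans_le (min_le_right _ _)
      _ = n * ν univ := lintegral_const _

theorem iSup_weightedNormRatio [IsFiniteMeasure ν] {p : ℝ} (hp : 1 ≤ p) (hω : Measurable ω) :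
    ⨆ (g : α → ℝ≥0) (_ : Measurable g), weightedNormRatio ν ω p g = dualWeight ν ω p := by
  rcases hp.eq_or_lt with rfl | hp
  · rw [dualWeight, if_pos rfl]
    exact le_antisymm (iSup₂_le fun g _ => weightedNormRatio_one_le_inv_essInf g)
      (inv_essInf_le_iSup_weightedNormRatio_one hω)
  · rw [dualWeight, if_neg hp.ne']
    exact le_antisymm (iSup₂_le fun g hg => weightedNormRatio_le_of_one_lt hp hω hg)
      (rpow_lintegral_le_iSup_weightedNormRatio_of_one_lt hp hω)

theorem mul_iSup_weightedNormRatio_rpow_mul_le_iff {p q : ℝ} (hq : 0 < q) (c X : ℝ≥0∞)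
    {C : ℝ≥0∞} (hC0 : C ≠ 0) (hCt : C ≠ ⊤) :
    (c * ⨆ (g : α → ℝ≥0) (_ : Measurable g), weightedNormRatio ν ω p g) ^ q * X ≤ C ↔
      ∀ g : α → ℝ≥0, Measurable g →
        (c * ∫⁻ x, g x ∂ν) ^ q * X ≤ C * (∫⁻ x, (g x : ℝ≥0∞) ^ p * ω x ∂ν) ^ (q / p) := by
  simp only [ENNReal.mul_iSup, ENNReal.iSup_rpow _ hq, ENNReal.iSup_mul, iSup_le_iff]
  exact forall₂_congr fun g _ => ENNReal.mul_div_rpow_rpow_mul_le_iff hq.le hC0 hCt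

end WeightedNorm

theorem box_eq_preimage (a b : ℝ) :
    Box a b = Complex.measurableEquivRealProd ⁻¹' (Ico a b ×ˢ Ioo 0 (b - a)) := by
  ext z
  simp [Box, Complex.measurableEquivRealProd_apply]

theorem volume_box_ne_top (a b : ℝ) : volume (Box a b) ≠ ⊤ := by
  rw [box_eq_preimage, Complex.volume_preserving_equiv_real_prod.measure_preimage_equiv,
    Measure.volume_eq_prod, Measure.prod_prod]
  exact ENNReal.mul_ne_top measure_Ico_lt_top.ne measure_Ioo_lt_top.ne

theorem dualFactor_eq {p : ℝ} (hp : 1 ≤ p) (ω : ℂ → ℝ≥0∞) (a b : ℝ) :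
    dualFactor ω p a b =
      (volume (Box a b))⁻¹ ^ ((p - 1) / p) * dualWeight (volume.restrict (Box a b)) ω p := by
  rw [dualFactor, dualWeight]
  split_ifs with h
  · simp [h]
  · exact ENNReal.mul_rpow_of_nonneg _ _ (div_nonneg (sub_nonneg.2 hp) (by linarith))

theorem box_testing_le_iff {p q : ℝ} (hp : 1 ≤ p) (hq : 0 < q) {ω : ℂ → ℝ≥0∞}
    (hω : Measurable ω) (μ : Measure ℂ) {C : ℝ≥0∞} (hC0 : C ≠ 0) (hCt : C ≠ ⊤) (a b : ℝ) :
    volume (Box a b) ^ (-(q / p)) * dualFactor ω p a b ^ q * μ (Box a b) ≤ C ↔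
      ∀ g : ℂ → ℝ≥0, Measurable g →
        ((volume (Box a b))⁻¹ * ∫⁻ w in Box a b, g w) ^ q * μ (Box a b) ≤
          C * (∫⁻ w in Box a b, (g w : ℝ≥0∞) ^ p * ω w) ^ (q / p) := by
  have := isFiniteMeasure_restrict.2 (volume_box_ne_top a b)
  set V := volume (Box a b)
  have hexp : q / p + (p - 1) / p * q = q := by
    have : p ≠ 0 := by linarith
    field_simp
    ring
  have hlhs : V ^ (-(q / p)) * dualFactor ω p a b ^ q =
      (V⁻¹ * dualWeight (volume.restrict (Box a b)) ω p) ^ q := by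
    rw [dualFactor_eq hp, ENNReal.mul_rpow_of_nonneg _ _ hq.le,
      ENNReal.mul_rpow_of_nonneg _ _ hq.le, ENNReal.rpow_neg, ← ENNReal.inv_rpow, ← mul_assoc,
      ← ENNReal.rpow_mul, ← ENNReal.rpow_add_of_nonneg _ _ (by positivity)
        (mul_nonneg (div_nonneg (sub_nonneg.2 hp) (by linarith)) hq.le), hexp]
  rw [hlhs, ← iSup_weightedNormRatio hp hω]
  exact mul_iSup_weightedNormRatio_rpow_mul_le_iff hq _ _ hC0 hCt

/-- Lemma: for `1 ≤ p, q < ∞`, a weight `ω` and a positive Borel measure `μ` on `𝓗`,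
the testing condition (i) on Carleson boxes is equivalent to the integral testing
condition (ii) over locally integrable functions. -/
theorem box_testing_iff_integral_testing (p q : ℝ) (hp : 1 ≤ p) (hq : 1 ≤ q)
    (ω : ℂ → ℝ≥0∞) (hω : Measurable ω) (μ : Measure ℂ) :
    (∃ C : ℝ≥0∞, 0 < C ∧ C < ⊤ ∧ ∀ a b : ℝ, a < b →
        volume (Box a b) ^ (-(q / p)) * dualFactor ω p a b ^ q * μ (Box a b) ≤ C) ↔
      (∃ C : ℝ≥0∞, 0 < C ∧ C < ⊤ ∧ ∀ f : ℂ → ℂ, Measurable f → ∀ a b : ℝ, a < b →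
        ((volume (Box a b))⁻¹ * ∫⁻ w in Box a b, (‖f w‖₊ : ℝ≥0∞)) ^ q * μ (Box a b) ≤
          C * (∫⁻ w in Box a b, (‖f w‖₊ : ℝ≥0∞) ^ p * ω w) ^ (q / p)) := by
  have hq0 : 0 < q := zero_lt_one.trans_le hq
  constructor
  · rintro ⟨C, hC0, hCt, hC⟩
    refine ⟨C, hC0, hCt, fun f hf a b hab => ?_⟩
    exact (box_testing_le_iff hp hq0 hω μ hC0.ne' hCt.ne a b).1 (hC a b hab) _ hf.nnnorm
  · rintro ⟨C, hC0, hCt, hC⟩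
    refine ⟨C, hC0, hCt, fun a b hab => ?_⟩
    refine (box_testing_le_iff hp hq0 hω μ hC0.ne' hCt.ne a b).2 fun g hg => ?_
    simpa using hC (fun w => ((g w : ℝ) : ℂ)) (by fun_prop) a b hab
end
end

section
/- Let 1 < p ≤ q < ∞, let ω be a weight on the upper half-plane 𝓗 belonging to the Békollé–Bonami class B_p, and let μ be a positive Borel measure on 𝓗 such that there is C₀ > 0 with μ(Q_I) ≤ C₀ (ω(Q_I))^{q/p} for every bounded interval I ⊂ ℝ. Then there is a constant C > 0 such that for every f ∈ L^p_ω(𝓗), (∫_𝓗 (M_{d,ω} f(z))^q dμ(z))^{1/q} ≤ C ‖f‖_{p,ω}. -/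
/-!
The level set `{M_{d,ω} g > t}` is the union of the dyadic Carleson boxes on which the
`ω`-average of `g` exceeds `t`. Two dyadic boxes are nested or disjoint, so a family of boxes
of bounded scale has the same union as its pairwise disjoint maximal members; exhausting by
scale, any inequality `ν(Q) ≤ c ρ(Q)^r` with `r ≥ 1` that holds on each box of the family
passes to its union, by superadditivity of `x ↦ x^r`. With the Carleson condition this gives
`μ{M g > t} ≤ C₀ ω{M g > t}^{q/p}`, and with `r = 1` the weak-type bound
`t ω{M g > t} ≤ ∫ g ω`. Applying the weak-type bound to the part of `g` above height `2^k`
yields `∑_k 2^{kp} ω{M g > 2^k} ≲ ∫ g^p ω`, and the dyadic layer-cake estimate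
`∫ (M g)^q dμ ≲ ∑_k 2^{kq} μ{M g > 2^k} ≤ C₀ ∑_k (2^{kp} ω{M g > 2^k})^{q/p}` finishes the
proof, once more by superadditivity of `x ↦ x^{q/p}`.
-/

open MeasureTheory Set
open scoped ENNReal NNReal

noncomputable section

/-- The `ω`-mass of a set, `ω(S) = ∫_S ω dV`. -/
def wMass (ω : ℂ → ℝ≥0∞) (S : Set ℂ) : ℝ≥0∞ := ∫⁻ z in S, ω z

/-- The Carleson box over the standard dyadic interval `[m·2^j, (m+1)·2^j)`. -/
def dBox (j m : ℤ) : Set ℂ := Box ((2 : ℝ) ^ j * (m : ℝ)) ((2 : ℝ) ^ j * ((m : ℝ) + 1))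

/-- The dyadic weighted maximal function `M_{d,ω} f` (standard dyadic grid). -/
def maxDW (ω : ℂ → ℝ≥0∞) (f : ℂ → ℂ) (z : ℂ) : ℝ≥0∞ :=
  ⨆ (j : ℤ) (m : ℤ) (_ : z ∈ dBox j m),
    (wMass ω (dBox j m))⁻¹ * ∫⁻ w in dBox j m, (‖f w‖₊ : ℝ≥0∞) * ω w

/-- The Békollé–Bonami constant `[ω]_{B_p}`. -/
def BBconst (ω : ℂ → ℝ≥0∞) (p : ℝ) : ℝ≥0∞ :=
  ⨆ (a : ℝ) (b : ℝ) (_ : a < b),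
    ((volume (Box a b))⁻¹ * wMass ω (Box a b)) *
      ((volume (Box a b))⁻¹ * ∫⁻ z in Box a b, ω z ^ (1 - p / (p - 1))) ^ (p - 1)

lemma measurableSet_Box (a b : ℝ) : MeasurableSet (Box a b) :=
  (Complex.measurable_re measurableSet_Ico).inter (Complex.measurable_im measurableSet_Ioo)

lemma mem_dBox_iff {j m : ℤ} {z : ℂ} :
    z ∈ dBox j m ↔ ⌊z.re / 2 ^ j⌋ = m ∧ 0 < z.im ∧ z.im < 2 ^ j := by
  have h2 : (0 : ℝ) < 2 ^ j := zpow_pos two_pos j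
  simp only [dBox, Box, mem_ofPred_eq, mem_Ico, mem_Ioo, Int.floor_eq_iff, le_div_iff₀ h2,
    div_lt_iff₀ h2, show (2 : ℝ) ^ j * (m + 1) - 2 ^ j * m = 2 ^ j by ring]
  constructor <;> rintro ⟨⟨h₁, h₂⟩, h₃⟩ <;> exact ⟨⟨by linarith, by linarith⟩, h₃⟩

lemma dBox_subset_UHP (j m : ℤ) : dBox j m ⊆ UHP := fun _ hz => (mem_dBox_iff.1 hz).2.1

lemma dBox_nonempty (j m : ℤ) : (dBox j m).Nonempty := by
  have h2 : (0 : ℝ) < 2 ^ j := zpow_pos two_pos j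
  refine ⟨⟨2 ^ j * m, 2 ^ j / 2⟩, mem_dBox_iff.2 ⟨?_, by simpa using h2, by simpa using h2⟩⟩
  simp [h2.ne']

lemma floor_div_two_zpow_add (x : ℝ) (j : ℤ) (d : ℕ) :
    ⌊x / 2 ^ (j + d)⌋ = ⌊x / 2 ^ j⌋ / 2 ^ d := by
  rw [zpow_add₀ two_ne_zero, zpow_natCast, ← div_div, ← Nat.cast_ofNat, ← Nat.cast_pow,
    Int.floor_div_natCast]
  push_cast; rfl

lemma eq_of_dBox_inter_nonempty {j m m' : ℤ} (h : (dBox j m ∩ dBox j m').Nonempty) : m = m' := by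
  obtain ⟨z, hz, hz'⟩ := h
  exact (mem_dBox_iff.1 hz).1.symm.trans (mem_dBox_iff.1 hz').1

lemma dBox_subset_of_le_of_inter_nonempty {j m j' m' : ℤ} (hj : j ≤ j')
    (h : (dBox j m ∩ dBox j' m').Nonempty) : dBox j m ⊆ dBox j' m' := by
  obtain ⟨d, rfl⟩ := Int.exists_add_of_le hj
  obtain ⟨z, hz, hz'⟩ := h
  intro w hw
  rw [mem_dBox_iff] at hz hz' hw ⊢
  refine ⟨?_, hw.2.1, hw.2.2.trans_le (zpow_le_zpow_right₀ one_le_two hj)⟩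
  rw [floor_div_two_zpow_add, hw.1, ← hz.1, ← floor_div_two_zpow_add, hz'.1]

lemma le_of_dBox_subset {j m j' m' : ℤ} (h : dBox j m ⊆ dBox j' m') : j ≤ j' := by
  by_contra! hlt
  have hz : (⟨2 ^ j * m, 2 ^ j'⟩ : ℂ) ∈ dBox j m := by
    refine mem_dBox_iff.2 ⟨?_, zpow_pos two_pos j', zpow_lt_zpow_right₀ one_lt_two hlt⟩
    simp [(zpow_pos (two_pos : (0 : ℝ) < 2) j).ne']
  exact lt_irrefl _ (mem_dBox_iff.1 (h hz)).2.2

lemma measurableSet_dBox (j m : ℤ) : MeasurableSet (dBox j m) := measurableSet_Box _ _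

lemma exists_maximal_dBox {S : Set (ℤ × ℤ)} {J : ℤ} (hS : ∀ x ∈ S, x.1 ≤ J) {x : ℤ × ℤ}
    (hx : x ∈ S) : ∃ y ∈ S, dBox x.1 x.2 ⊆ dBox y.1 y.2 ∧
      ∀ y' ∈ S, dBox y.1 y.2 ⊆ dBox y'.1 y'.2 → y' = y := by
  obtain ⟨j, ⟨y, hyS, rfl, hxy⟩, hmax⟩ := Int.exists_greatest_of_bdd
    (P := fun j => ∃ y ∈ S, y.1 = j ∧ dBox x.1 x.2 ⊆ dBox y.1 y.2)
    ⟨J, by rintro _ ⟨y, hy, rfl, -⟩; exact hS y hy⟩ ⟨x.1, x, hx, rfl, subset_rfl⟩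
  refine ⟨y, hyS, hxy, fun y' hy' hyy' => ?_⟩
  have hscale : y'.1 = y.1 :=
    le_antisymm (hmax _ ⟨y', hy', rfl, hxy.trans hyy'⟩) (le_of_dBox_subset hyy')
  obtain ⟨z, hz⟩ := dBox_nonempty y.1 y.2
  have hz' : z ∈ dBox y.1 y'.2 := hscale ▸ hyy' hz
  exact Prod.ext hscale (eq_of_dBox_inter_nonempty ⟨z, hz', hz⟩)

lemma exists_pairwiseDisjoint_dBox_cover {S : Set (ℤ × ℤ)} {J : ℤ} (hS : ∀ x ∈ S, x.1 ≤ J) :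
    ∃ T ⊆ S, (⋃ x ∈ T, dBox x.1 x.2) = ⋃ x ∈ S, dBox x.1 x.2 ∧
      T.PairwiseDisjoint (fun x => dBox x.1 x.2) := by
  set T := {y ∈ S | ∀ y' ∈ S, dBox y.1 y.2 ⊆ dBox y'.1 y'.2 → y' = y}
  refine ⟨T, fun y hy => hy.1, (biUnion_subset_biUnion_left fun y hy => hy.1).antisymm ?_, ?_⟩
  · refine iUnion₂_subset fun x hx => ?_
    obtain ⟨y, hyS, hxy, hmax⟩ := exists_maximal_dBox hS hx
    exact hxy.trans (subset_biUnion_of_mem (u := fun y : ℤ × ℤ => dBox y.1 y.2)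
      (show y ∈ T from ⟨hyS, hmax⟩))
  · intro x hx y hy hne
    rw [Function.onFun, Set.disjoint_iff_inter_eq_empty, ← not_nonempty_iff_eq_empty]
    intro hxy
    rcases le_total x.1 y.1 with h | h
    · exact hne (hx.2 y hy.1 (dBox_subset_of_le_of_inter_nonempty h hxy)).symm
    · exact hne (hy.2 x hx.1 (dBox_subset_of_le_of_inter_nonempty h (inter_comm _ _ ▸ hxy)))

lemma ENNReal.rpow_sub_one_mul_self {r : ℝ} (hr : 1 ≤ r) (x : ℝ≥0∞) :
    x ^ (r - 1) * x = x ^ r := by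
  conv_rhs => rw [show r = (r - 1) + 1 by ring]
  rw [ENNReal.rpow_add_of_nonneg _ _ (by linarith) zero_le_one, ENNReal.rpow_one]

lemma ENNReal.tsum_rpow_le_rpow_tsum {ι : Type*} (a : ι → ℝ≥0∞) {r : ℝ} (hr : 1 ≤ r) :
    ∑' i, a i ^ r ≤ (∑' i, a i) ^ r := by
  calc ∑' i, a i ^ r = ∑' i, a i ^ (r - 1) * a i :=
        tsum_congr fun i => (ENNReal.rpow_sub_one_mul_self hr _).symm
    _ ≤ ∑' i, (∑' j, a j) ^ (r - 1) * a i := ENNReal.tsum_le_tsum fun i =>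
        mul_le_mul_left (ENNReal.rpow_le_rpow (ENNReal.le_tsum i) (by linarith)) _
    _ = (∑' j, a j) ^ (r - 1) * ∑' i, a i := ENNReal.tsum_mul_left
    _ = (∑' i, a i) ^ r := ENNReal.rpow_sub_one_mul_self hr _

section CarlesonType

variable {ν ρ : Measure ℂ} {c : ℝ≥0∞} {r : ℝ}

lemma measure_biUnion_dBox_le_of_scale_le (hr : 1 ≤ r) {S : Set (ℤ × ℤ)} {J : ℤ}
    (hJ : ∀ x ∈ S, x.1 ≤ J) (hS : ∀ x ∈ S, ν (dBox x.1 x.2) ≤ c * ρ (dBox x.1 x.2) ^ r) :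
    ν (⋃ x ∈ S, dBox x.1 x.2) ≤ c * ρ (⋃ x ∈ S, dBox x.1 x.2) ^ r := by
  obtain ⟨T, hTS, hTS_eq, hT⟩ := exists_pairwiseDisjoint_dBox_cover hJ
  rw [← hTS_eq, biUnion_eq_iUnion]
  calc ν (⋃ x : T, dBox x.1.1 x.1.2) ≤ ∑' x : T, ν (dBox x.1.1 x.1.2) := measure_iUnion_le _
    _ ≤ ∑' x : T, c * ρ (dBox x.1.1 x.1.2) ^ r :=
        ENNReal.tsum_le_tsum fun x => hS x (hTS x.2)
    _ = c * ∑' x : T, ρ (dBox x.1.1 x.1.2) ^ r := ENNReal.tsum_mul_left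
    _ ≤ c * (∑' x : T, ρ (dBox x.1.1 x.1.2)) ^ r := by
        gcongr; exact ENNReal.tsum_rpow_le_rpow_tsum _ hr
    _ = c * ρ (⋃ x : T, dBox x.1.1 x.1.2) ^ r := by
        rw [measure_iUnion (hT.subtype _ _) fun x => measurableSet_dBox _ _]

lemma measure_biUnion_dBox_le (hr : 1 ≤ r) {S : Set (ℤ × ℤ)}
    (hS : ∀ x ∈ S, ν (dBox x.1 x.2) ≤ c * ρ (dBox x.1 x.2) ^ r) :
    ν (⋃ x ∈ S, dBox x.1 x.2) ≤ c * ρ (⋃ x ∈ S, dBox x.1 x.2) ^ r := by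
  set E : ℤ → Set ℂ := fun J => ⋃ x ∈ {x ∈ S | x.1 ≤ J}, dBox x.1 x.2
  have hE : Monotone E := fun J J' h =>
    biUnion_subset_biUnion_left fun x hx => ⟨hx.1, hx.2.trans h⟩
  have hunion : ⋃ x ∈ S, dBox x.1 x.2 = ⋃ J, E J := by
    refine (iUnion₂_subset fun x hx => ?_).antisymm
      (iUnion_subset fun J => biUnion_subset_biUnion_left fun x hx => hx.1)
    refine Subset.trans ?_ (subset_iUnion E x.1)
    exact subset_biUnion_of_mem (u := fun y : ℤ × ℤ => dBox y.1 y.2)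
      (show x ∈ {y ∈ S | y.1 ≤ x.1} from ⟨hx, le_rfl⟩)
  rw [hunion, hE.measure_iUnion]
  refine iSup_le fun J => (measure_biUnion_dBox_le_of_scale_le hr (fun x hx => hx.2)
    fun x hx => hS x hx.1).trans ?_
  exact mul_le_mul_right (ENNReal.rpow_le_rpow (measure_mono (subset_iUnion E J)) (by linarith)) c

end CarlesonType

def wAvg (ω g : ℂ → ℝ≥0∞) (x : ℤ × ℤ) : ℝ≥0∞ :=
  (wMass ω (dBox x.1 x.2))⁻¹ * ∫⁻ w in dBox x.1 x.2, g w * ω w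

def dMax (ω g : ℂ → ℝ≥0∞) (z : ℂ) : ℝ≥0∞ := ⨆ (x : ℤ × ℤ) (_ : z ∈ dBox x.1 x.2), wAvg ω g x

lemma maxDW_eq_dMax (ω : ℂ → ℝ≥0∞) (f : ℂ → ℂ) :
    maxDW ω f = dMax ω (fun z => ‖f z‖₊) := by
  ext z
  rw [maxDW, dMax, iSup_prod]
  rfl

section LevelSets

variable {ω g : ℂ → ℝ≥0∞} {t : ℝ≥0∞}

lemma setOf_lt_dMax : {z | t < dMax ω g z} = ⋃ x ∈ {x | t < wAvg ω g x}, dBox x.1 x.2 := by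
  ext z
  simp only [dMax, mem_ofPred_eq, lt_iSup_iff, mem_iUnion, exists_prop, and_comm]

lemma measurableSet_setOf_lt_dMax : MeasurableSet {z | t < dMax ω g z} := by
  rw [setOf_lt_dMax]
  exact .biUnion (to_countable _) fun x _ => measurableSet_dBox _ _

lemma measurable_dMax : Measurable (dMax ω g) :=
  measurable_of_Ioi fun _ => measurableSet_setOf_lt_dMax

lemma setOf_lt_dMax_subset_UHP : {z | t < dMax ω g z} ⊆ UHP := by
  rw [setOf_lt_dMax]
  exact iUnion₂_subset fun x _ => dBox_subset_UHP _ _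

lemma mul_wMass_le_of_lt_wAvg {x : ℤ × ℤ} (h : t < wAvg ω g x) :
    t * wMass ω (dBox x.1 x.2) ≤ ∫⁻ w in dBox x.1 x.2, g w * ω w :=
  ENNReal.mul_le_of_le_div (h.le.trans_eq (by rw [wAvg, div_eq_mul_inv, mul_comm]))

lemma wMass_eq_withDensity (s : Set ℂ) : wMass ω s = volume.withDensity ω s :=
  (withDensity_apply' ω s).symm

lemma measure_setOf_lt_dMax_le {μ : Measure ℂ} {C₀ : ℝ≥0∞} {r : ℝ} (hr : 1 ≤ r)
    (hμ : ∀ j m, μ (dBox j m) ≤ C₀ * wMass ω (dBox j m) ^ r) :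
    μ {z | t < dMax ω g z} ≤ C₀ * wMass ω {z | t < dMax ω g z} ^ r := by
  simp only [setOf_lt_dMax, wMass_eq_withDensity] at hμ ⊢
  exact measure_biUnion_dBox_le hr fun x _ => hμ x.1 x.2

lemma mul_wMass_setOf_lt_dMax_le :
    t * wMass ω {z | t < dMax ω g z} ≤ ∫⁻ z in UHP, g z * ω z := by
  have h := measure_biUnion_dBox_le (ν := t • volume.withDensity ω)
    (ρ := volume.withDensity (g * ω)) (c := 1) le_rfl (S := {x | t < wAvg ω g x})
    fun x hx => by
      simpa [withDensity_apply', wMass] using mul_wMass_le_of_lt_wAvg hx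
  rw [← setOf_lt_dMax] at h
  simp only [Measure.smul_apply, smul_eq_mul, one_mul, ENNReal.rpow_one, withDensity_apply',
    Pi.mul_apply] at h
  exact h.trans (lintegral_mono_set setOf_lt_dMax_subset_UHP)

end LevelSets

section Truncation

variable {ω : ℂ → ℝ≥0∞}

lemma wAvg_le_wAvg_add (hω : Measurable ω) {g g' : ℂ → ℝ≥0∞} {c : ℝ≥0∞}
    (h : ∀ w, g w ≤ g' w + c) (x : ℤ × ℤ) :
    wAvg ω g x ≤ wAvg ω g' x + c := by
  set W := wMass ω (dBox x.1 x.2)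
  calc wAvg ω g x ≤ W⁻¹ * ∫⁻ w in dBox x.1 x.2, g' w * ω w + c * ω w := by
        unfold wAvg
        gcongr with w
        calc g w * ω w ≤ (g' w + c) * ω w := by gcongr; exact h w
          _ = _ := add_mul _ _ _
    _ = wAvg ω g' x + W⁻¹ * (c * W) := by
        rw [lintegral_add_right _ (hω.const_mul c), lintegral_const_mul c hω, mul_add]
        rfl
    _ ≤ wAvg ω g' x + c := by
        gcongr
        rw [mul_left_comm]
        exact mul_le_of_le_one_right' (ENNReal.inv_mul_le_one W)

lemma dMax_le_dMax_add (hω : Measurable ω) {g g' : ℂ → ℝ≥0∞} {c : ℝ≥0∞}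
    (h : ∀ w, g w ≤ g' w + c) (z : ℂ) :
    dMax ω g z ≤ dMax ω g' z + c := by
  unfold dMax
  refine iSup₂_le fun x hz => (wAvg_le_wAvg_add hω h x).trans ?_
  have hx := le_iSup₂ (f := fun x (_ : z ∈ dBox x.1 x.2) => wAvg ω g' x) x hz
  exact add_le_add_left hx c

lemma setOf_two_mul_lt_dMax_subset (hω : Measurable ω) (g : ℂ → ℝ≥0∞) (c : ℝ≥0∞) :
    {z | 2 * c < dMax ω g z} ⊆ {z | c < dMax ω ({w | c < g w}.indicator g) z} := by
  intro z hz
  by_contra! hle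
  have hsplit (w : ℂ) : g w ≤ {w | c < g w}.indicator g w + c := by
    by_cases h : c < g w
    · simp [indicator_of_mem (show w ∈ {w | c < g w} from h)]
    · rw [indicator_of_notMem (show w ∉ {w | c < g w} from h), zero_add]
      exact not_lt.1 h
  have hle' := (dMax_le_dMax_add hω hsplit z).trans (add_le_add_left (not_lt.1 hle) c)
  rw [← two_mul] at hle'
  exact hle'.not_gt hz

lemma mul_wMass_setOf_two_mul_lt_dMax_le (hω : Measurable ω) (g : ℂ → ℝ≥0∞) (c : ℝ≥0∞) :
    c * wMass ω {z | 2 * c < dMax ω g z} ≤ ∫⁻ z in UHP, {w | c < g w}.indicator g z * ω z :=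
  (mul_le_mul_right (lintegral_mono_set (setOf_two_mul_lt_dMax_subset hω g c)) c).trans
    mul_wMass_setOf_lt_dMax_le

end Truncation

lemma two_zpow_rpow (k : ℤ) (s : ℝ) : ((2 : ℝ≥0∞) ^ k) ^ s = 2 ^ ((k : ℝ) * s) := by
  rw [← ENNReal.rpow_intCast, ← ENNReal.rpow_mul]

lemma tsum_indicator_Iic_two_zpow_rpow (s : ℝ) (j : ℤ) :
    ∑' k : ℤ, (Iic j).indicator (fun k => ((2 : ℝ≥0∞) ^ k) ^ s) k =
      ((2 : ℝ≥0∞) ^ j) ^ s * (1 - 2 ^ (-s))⁻¹ := by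
  have hinj : Function.Injective (fun n : ℕ => j - n) := fun a b h => by simpa using h
  have hsupp : Function.support ((Iic j).indicator fun k => ((2 : ℝ≥0∞) ^ k) ^ s) ⊆
      range (fun n : ℕ => j - n) := fun k hk =>
    have hkj : k ≤ j := mem_Iic.1 (support_indicator_subset hk)
    ⟨(j - k).toNat, show j - ((j - k).toNat : ℤ) = k by omega⟩
  rw [← hinj.tsum_eq hsupp]
  calc ∑' n : ℕ, (Iic j).indicator (fun k => ((2 : ℝ≥0∞) ^ k) ^ s) (j - n)
      = ∑' n : ℕ, ((2 : ℝ≥0∞) ^ j) ^ s * (2 ^ (-s)) ^ n := tsum_congr fun n => by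
        rw [indicator_of_mem (show j - (n : ℤ) ∈ Iic j by simp), two_zpow_rpow,
          two_zpow_rpow, ← ENNReal.rpow_natCast, ← ENNReal.rpow_mul,
          ← ENNReal.rpow_add _ _ two_ne_zero ENNReal.ofNat_ne_top]
        congr 1
        push_cast
        ring
    _ = ((2 : ℝ≥0∞) ^ j) ^ s * (1 - 2 ^ (-s))⁻¹ := by
        rw [ENNReal.tsum_mul_left, ENNReal.tsum_geometric]

lemma inv_one_sub_two_rpow_neg_ne_top {s : ℝ} (hs : 0 < s) : (1 - (2 : ℝ≥0∞) ^ (-s))⁻¹ ≠ ⊤ :=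
  ENNReal.inv_ne_top.2
    (tsub_pos_of_lt (ENNReal.rpow_lt_one_of_one_lt_of_neg ENNReal.one_lt_two (by linarith))).ne'

def dyadicLayerSum (s : ℝ) (x : ℝ≥0∞) : ℝ≥0∞ :=
  ∑' k : ℤ, {k : ℤ | (2 : ℝ≥0∞) ^ k < x}.indicator (fun k => ((2 : ℝ≥0∞) ^ k) ^ s) k

lemma dyadicLayerSum_le {s : ℝ} (hs : 0 < s) (x : ℝ≥0∞) :
    dyadicLayerSum s x ≤ (1 - 2 ^ (-s))⁻¹ * x ^ s := by
  rcases eq_or_ne x 0 with rfl | hx0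
  · simp [dyadicLayerSum]
  rcases eq_or_ne x ⊤ with rfl | hxtop
  · rw [ENNReal.top_rpow_of_pos hs,
      ENNReal.mul_top (ENNReal.inv_ne_zero.2 (ENNReal.sub_ne_top ENNReal.one_ne_top))]
    exact le_top
  obtain ⟨j, hjx, hxj⟩ :=
    ENNReal.exists_mem_Ioc_zpow hx0 hxtop ENNReal.one_lt_two ENNReal.ofNat_ne_top
  have hsub : {k : ℤ | (2 : ℝ≥0∞) ^ k < x} ⊆ Iic j := fun k hk => mem_Iic.2 <| by
    by_contra! hjk
    exact (hk.trans_le hxj).not_ge (ENNReal.zpow_le_of_le one_le_two (Int.add_one_le_of_lt hjk))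
  calc dyadicLayerSum s x ≤ ∑' k : ℤ, (Iic j).indicator (fun k => ((2 : ℝ≥0∞) ^ k) ^ s) k :=
        ENNReal.tsum_le_tsum fun k => indicator_le_indicator_of_subset hsub (fun _ => zero_le) k
    _ = ((2 : ℝ≥0∞) ^ j) ^ s * (1 - 2 ^ (-s))⁻¹ := tsum_indicator_Iic_two_zpow_rpow s j
    _ ≤ (1 - 2 ^ (-s))⁻¹ * x ^ s := by
        rw [mul_comm]
        gcongr

lemma dyadicLayerSum_top {s : ℝ} (hs : 0 < s) : dyadicLayerSum s ⊤ = ⊤ := by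
  refine top_le_iff.1 ?_
  calc ⊤ = ∑' _ : ℕ, (1 : ℝ≥0∞) := (ENNReal.tsum_const_eq_top_of_ne_zero one_ne_zero).symm
    _ ≤ ∑' n : ℕ, {k : ℤ | (2 : ℝ≥0∞) ^ k < ⊤}.indicator (fun k => ((2 : ℝ≥0∞) ^ k) ^ s) n :=
        ENNReal.tsum_le_tsum fun n => by
          rw [indicator_of_mem (show (n : ℤ) ∈ {k : ℤ | (2 : ℝ≥0∞) ^ k < ⊤} from
            ENNReal.zpow_lt_top two_ne_zero ENNReal.ofNat_ne_top _), zpow_natCast]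
          exact ENNReal.one_le_rpow (one_le_pow₀ one_le_two) hs
    _ ≤ dyadicLayerSum s ⊤ := ENNReal.tsum_comp_le_tsum_of_injective Nat.cast_injective _

lemma rpow_le_two_rpow_mul_dyadicLayerSum {s : ℝ} (hs : 0 < s) (x : ℝ≥0∞) :
    x ^ s ≤ 2 ^ s * dyadicLayerSum s x := by
  rcases eq_or_ne x 0 with rfl | hx0
  · simp [ENNReal.zero_rpow_of_pos hs]
  rcases eq_or_ne x ⊤ with rfl | hxtop
  · rw [dyadicLayerSum_top hs, ENNReal.mul_top (by positivity)]
    exact le_top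
  obtain ⟨j, hjx, hxj⟩ :=
    ENNReal.exists_mem_Ioc_zpow hx0 hxtop ENNReal.one_lt_two ENNReal.ofNat_ne_top
  calc x ^ s ≤ ((2 : ℝ≥0∞) ^ (j + 1)) ^ s := ENNReal.rpow_le_rpow hxj hs.le
    _ = 2 ^ s * ((2 : ℝ≥0∞) ^ j) ^ s := by
        rw [ENNReal.zpow_add two_ne_zero ENNReal.ofNat_ne_top, zpow_one, mul_comm,
          ENNReal.mul_rpow_of_nonneg _ _ hs.le]
    _ ≤ 2 ^ s * dyadicLayerSum s x := by
        gcongr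
        exact (indicator_of_mem (show j ∈ {k : ℤ | (2 : ℝ≥0∞) ^ k < x} from hjx) _).symm.le.trans
          (ENNReal.le_tsum j)

lemma lintegral_rpow_le_two_rpow_mul_tsum {α : Type*} [MeasurableSpace α] {μ : Measure α}
    {h : α → ℝ≥0∞} (hh : Measurable h) {s : ℝ} (hs : 0 < s) :
    ∫⁻ z, h z ^ s ∂μ ≤ 2 ^ s * ∑' k : ℤ, ((2 : ℝ≥0∞) ^ k) ^ s * μ {z | 2 ^ k < h z} := by
  have hmeas (k : ℤ) : MeasurableSet {z | (2 : ℝ≥0∞) ^ k < h z} :=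
    measurableSet_lt measurable_const hh
  have hlayer (z : α) (k : ℤ) :
      {k : ℤ | (2 : ℝ≥0∞) ^ k < h z}.indicator (fun k => ((2 : ℝ≥0∞) ^ k) ^ s) k =
        {z | 2 ^ k < h z}.indicator (fun _ => ((2 : ℝ≥0∞) ^ k) ^ s) z := by
    simp only [indicator_apply, mem_ofPred_eq]
  calc ∫⁻ z, h z ^ s ∂μ ≤ ∫⁻ z, 2 ^ s * dyadicLayerSum s (h z) ∂μ :=
        lintegral_mono fun z => rpow_le_two_rpow_mul_dyadicLayerSum hs _
    _ = 2 ^ s * ∑' k : ℤ, ((2 : ℝ≥0∞) ^ k) ^ s * μ {z | 2 ^ k < h z} := by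
        simp only [dyadicLayerSum, hlayer]
        rw [lintegral_const_mul' _ _ (ENNReal.rpow_ne_top_of_nonneg hs.le ENNReal.ofNat_ne_top),
          lintegral_tsum (f := fun k z => {z | 2 ^ k < h z}.indicator
            (fun _ => ((2 : ℝ≥0∞) ^ k) ^ s) z)
            fun k => (measurable_const.indicator (hmeas k)).aemeasurable]
        simp only [lintegral_indicator_const (hmeas _)]

lemma tsum_two_zpow_rpow_mul_indicator_le {α : Type*} (F : α → ℝ≥0∞) {p : ℝ} (hp : 1 < p)
    (z : α) :
    ∑' k : ℤ, ((2 : ℝ≥0∞) ^ k) ^ (p - 1) * {w | (2 : ℝ≥0∞) ^ k < F w}.indicator F z ≤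
      (1 - 2 ^ (-(p - 1)))⁻¹ * F z ^ p := by
  calc ∑' k : ℤ, ((2 : ℝ≥0∞) ^ k) ^ (p - 1) * {w | (2 : ℝ≥0∞) ^ k < F w}.indicator F z
      = dyadicLayerSum (p - 1) (F z) * F z := by
        rw [dyadicLayerSum, ← ENNReal.tsum_mul_right]
        refine tsum_congr fun k => ?_
        by_cases h : (2 : ℝ≥0∞) ^ k < F z <;> simp [h]
    _ ≤ (1 - 2 ^ (-(p - 1)))⁻¹ * F z ^ (p - 1) * F z := by
        gcongr
        exact dyadicLayerSum_le (by linarith) _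
    _ = (1 - 2 ^ (-(p - 1)))⁻¹ * F z ^ p := by
        rw [mul_assoc, ENNReal.rpow_sub_one_mul_self hp.le]

lemma tsum_rpow_mul_wMass_setOf_lt_dMax_le {ω F : ℂ → ℝ≥0∞} (hω : Measurable ω)
    (hF : Measurable F) {p : ℝ} (hp : 1 < p) :
    ∑' k : ℤ, ((2 : ℝ≥0∞) ^ k) ^ p * wMass ω {z | 2 ^ k < dMax ω F z} ≤
      2 ^ p * (1 - 2 ^ (-(p - 1)))⁻¹ * ∫⁻ z in UHP, F z ^ p * ω z := by
  set G : ℤ → ℂ → ℝ≥0∞ := fun k => {w | (2 : ℝ≥0∞) ^ k < F w}.indicator F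
  have hG (k : ℤ) : Measurable (G k) := hF.indicator (measurableSet_lt measurable_const hF)
  have hterm (k : ℤ) : ((2 : ℝ≥0∞) ^ (k + 1)) ^ p * wMass ω {z | 2 ^ (k + 1) < dMax ω F z} ≤
      2 ^ p * ∫⁻ z in UHP, ((2 : ℝ≥0∞) ^ k) ^ (p - 1) * G k z * ω z := by
    have h2k : (2 : ℝ≥0∞) ^ (k + 1) = 2 * 2 ^ k := by
      rw [ENNReal.zpow_add two_ne_zero ENNReal.ofNat_ne_top, zpow_one, mul_comm]
    calc ((2 : ℝ≥0∞) ^ (k + 1)) ^ p * wMass ω {z | 2 ^ (k + 1) < dMax ω F z}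
        = 2 ^ p * (((2 : ℝ≥0∞) ^ k) ^ (p - 1) *
            (2 ^ k * wMass ω {z | 2 * 2 ^ k < dMax ω F z})) := by
          rw [h2k, ENNReal.mul_rpow_of_nonneg _ _ (by linarith),
            ← ENNReal.rpow_sub_one_mul_self hp.le (2 ^ k)]
          ring
      _ ≤ 2 ^ p * (((2 : ℝ≥0∞) ^ k) ^ (p - 1) * ∫⁻ z in UHP, G k z * ω z) := by
          gcongr
          exact mul_wMass_setOf_two_mul_lt_dMax_le hω F _
      _ = 2 ^ p * ∫⁻ z in UHP, ((2 : ℝ≥0∞) ^ k) ^ (p - 1) * G k z * ω z := by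
          rw [← lintegral_const_mul (f := fun z => G k z * ω z) _ ((hG k).mul hω)]
          simp only [mul_assoc]
  calc ∑' k : ℤ, ((2 : ℝ≥0∞) ^ k) ^ p * wMass ω {z | 2 ^ k < dMax ω F z}
      = ∑' k : ℤ, ((2 : ℝ≥0∞) ^ (k + 1)) ^ p * wMass ω {z | 2 ^ (k + 1) < dMax ω F z} :=
        ((Equiv.addRight 1).tsum_eq fun k => ((2 : ℝ≥0∞) ^ k) ^ p *
          wMass ω {z | 2 ^ k < dMax ω F z}).symm
    _ ≤ ∑' k : ℤ, 2 ^ p * ∫⁻ z in UHP, ((2 : ℝ≥0∞) ^ k) ^ (p - 1) * G k z * ω z :=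
        ENNReal.tsum_le_tsum hterm
    _ = 2 ^ p * ∫⁻ z in UHP, (∑' k : ℤ, ((2 : ℝ≥0∞) ^ k) ^ (p - 1) * G k z) * ω z := by
        simp only [← ENNReal.tsum_mul_right]
        rw [ENNReal.tsum_mul_left, lintegral_tsum (f := fun k z => ((2 : ℝ≥0∞) ^ k) ^ (p - 1) *
          G k z * ω z) fun k => ((measurable_const.mul (hG k)).mul hω).aemeasurable]
    _ ≤ 2 ^ p * ∫⁻ z in UHP, (1 - 2 ^ (-(p - 1)))⁻¹ * (F z ^ p * ω z) := by
        refine mul_le_mul_right (lintegral_mono fun z => ?_) _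
        rw [← mul_assoc]
        exact mul_le_mul_left (tsum_two_zpow_rpow_mul_indicator_le F hp z) _
    _ = 2 ^ p * (1 - 2 ^ (-(p - 1)))⁻¹ * ∫⁻ z in UHP, F z ^ p * ω z := by
        rw [lintegral_const_mul' _ _ (inv_one_sub_two_rpow_neg_ne_top (by linarith)), mul_assoc]

lemma lintegral_dMax_rpow_le {ω : ℂ → ℝ≥0∞} {μ : Measure ℂ} {C₀ : ℝ≥0∞} {p q : ℝ} (hp : 0 < p)
    (hpq : p ≤ q) (hμ : ∀ j m, μ (dBox j m) ≤ C₀ * wMass ω (dBox j m) ^ (q / p))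
    (g : ℂ → ℝ≥0∞) :
    ∫⁻ z, dMax ω g z ^ q ∂μ ≤ 2 ^ q * C₀ *
      (∑' k : ℤ, ((2 : ℝ≥0∞) ^ k) ^ p * wMass ω {z | 2 ^ k < dMax ω g z}) ^ (q / p) := by
  have hqp : 1 ≤ q / p := (one_le_div hp).2 hpq
  calc ∫⁻ z, dMax ω g z ^ q ∂μ
      ≤ 2 ^ q * ∑' k : ℤ, ((2 : ℝ≥0∞) ^ k) ^ q * μ {z | 2 ^ k < dMax ω g z} :=
        lintegral_rpow_le_two_rpow_mul_tsum measurable_dMax (hp.trans_le hpq)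
    _ ≤ 2 ^ q * ∑' k : ℤ, ((2 : ℝ≥0∞) ^ k) ^ q *
          (C₀ * wMass ω {z | 2 ^ k < dMax ω g z} ^ (q / p)) := by
        gcongr
        exact measure_setOf_lt_dMax_le hqp hμ
    _ = 2 ^ q * C₀ *
          ∑' k : ℤ, (((2 : ℝ≥0∞) ^ k) ^ p * wMass ω {z | 2 ^ k < dMax ω g z}) ^ (q / p) := by
        rw [mul_assoc, ← ENNReal.tsum_mul_left (a := C₀)]
        refine congrArg (2 ^ q * ·) (tsum_congr fun k => ?_)
        rw [ENNReal.mul_rpow_of_nonneg _ _ (by positivity), ← ENNReal.rpow_mul,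
          mul_div_cancel₀ _ hp.ne']
        ring
    _ ≤ 2 ^ q * C₀ *
          (∑' k : ℤ, ((2 : ℝ≥0∞) ^ k) ^ p * wMass ω {z | 2 ^ k < dMax ω g z}) ^ (q / p) := by
        gcongr
        exact ENNReal.tsum_rpow_le_rpow_tsum _ hqp

theorem dyadic_maximal_carleson_embedding_general (p q : ℝ) (hp : 1 < p) (hpq : p ≤ q)
    (ω : ℂ → ℝ≥0∞) (hω : Measurable ω)
    (μ : Measure ℂ) (C₀ : ℝ≥0∞) (hC₀pos : 0 < C₀) (hC₀fin : C₀ < ⊤)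
    (hμ : ∀ a b : ℝ, a < b → μ (Box a b) ≤ C₀ * wMass ω (Box a b) ^ (q / p)) :
    ∃ C : ℝ≥0∞, 0 < C ∧ C < ⊤ ∧ ∀ f : ℂ → ℂ, Measurable f →
      (∫⁻ z in UHP, maxDW ω f z ^ q ∂μ) ^ (1 / q) ≤
        C * (∫⁻ z in UHP, (‖f z‖₊ : ℝ≥0∞) ^ p * ω z) ^ (1 / p) := by
  have hq : 0 < q := by linarith
  have hgeom₀ : (1 - (2 : ℝ≥0∞) ^ (-(p - 1)))⁻¹ ≠ 0 :=
    ENNReal.inv_ne_zero.2 (ENNReal.sub_ne_top ENNReal.one_ne_top)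
  have hgeom := inv_one_sub_two_rpow_neg_ne_top (show 0 < p - 1 by linarith)
  have hC₀ := hC₀fin.ne
  set Cp : ℝ≥0∞ := 2 ^ p * (1 - 2 ^ (-(p - 1)))⁻¹
  refine ⟨(2 ^ q * C₀) ^ (1 / q) * Cp ^ (1 / p), by positivity, lt_top_iff_ne_top.2 (by finiteness),
    fun f hf => ?_⟩
  have hdyadic (j m : ℤ) : μ (dBox j m) ≤ C₀ * wMass ω (dBox j m) ^ (q / p) :=
    hμ _ _ (mul_lt_mul_of_pos_left (lt_add_one _) (zpow_pos two_pos j))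
  calc (∫⁻ z in UHP, maxDW ω f z ^ q ∂μ) ^ (1 / q)
      ≤ (2 ^ q * C₀ * (Cp * ∫⁻ z in UHP, (‖f z‖₊ : ℝ≥0∞) ^ p * ω z) ^ (q / p)) ^ (1 / q) := by
        rw [maxDW_eq_dMax]
        gcongr
        refine (setLIntegral_le_lintegral _ _).trans
          ((lintegral_dMax_rpow_le (by linarith) hpq hdyadic _).trans ?_)
        gcongr
        exact tsum_rpow_mul_wMass_setOf_lt_dMax_le hω hf.nnnorm.coe_nnreal_ennreal hp
    _ = (2 ^ q * C₀) ^ (1 / q) * Cp ^ (1 / p) *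
          (∫⁻ z in UHP, (‖f z‖₊ : ℝ≥0∞) ^ p * ω z) ^ (1 / p) := by
        rw [ENNReal.mul_rpow_of_nonneg (2 ^ q * C₀) _ (by positivity), ← ENNReal.rpow_mul,
          show q / p * (1 / q) = 1 / p by field_simp,
          ENNReal.mul_rpow_of_nonneg Cp _ (by positivity), mul_assoc]

/-- Lemma: for `1 < p ≤ q < ∞`, `ω ∈ B_p`, and `μ` a positive Borel measure with
`μ(Q_I) ≤ C₀ (ω(Q_I))^{q/p}` for every bounded interval `I ⊂ ℝ`, the dyadic
maximal Carleson embedding `(∫_𝓗 (M_{d,ω} f)^q dμ)^{1/q} ≤ C ‖f‖_{p,ω}` holds. -/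
theorem dyadic_maximal_carleson_embedding (p q : ℝ) (hp : 1 < p) (hpq : p ≤ q)
    (ω : ℂ → ℝ≥0∞) (hω : Measurable ω) (hBp : BBconst ω p < ⊤)
    (μ : Measure ℂ) (C₀ : ℝ≥0∞) (hC₀pos : 0 < C₀) (hC₀fin : C₀ < ⊤)
    (hμ : ∀ a b : ℝ, a < b → μ (Box a b) ≤ C₀ * wMass ω (Box a b) ^ (q / p)) :
    ∃ C : ℝ≥0∞, 0 < C ∧ C < ⊤ ∧ ∀ f : ℂ → ℂ, Measurable f →
      (∫⁻ z in UHP, maxDW ω f z ^ q ∂μ) ^ (1 / q) ≤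
        C * (∫⁻ z in UHP, (‖f z‖₊ : ℝ≥0∞) ^ p * ω z) ^ (1 / p) :=
  dyadic_maximal_carleson_embedding_general p q hp hpq ω hω μ C₀ hC₀pos hC₀fin hμ
end
end
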